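/- Let (ΩR, d) have volume form 𝗏 ∈ Ω^N R and let σ be a degree-preserving automorphism of ΩR commuting with d. In the (N+1)-dimensional calculus ΩA on A = R[z;σ], the element 𝗏 dz is a volume form: Ω^{N+1} A = 𝗏 dz · A = A · 𝗏 dz is free of rank one as a right and as a left A-module, and the associated twisting automorphism is σ̄^{-1} ∘ θ̄, where θ̄(Σ a_i z^i) = Σ θ_𝗏(a_i)(uz)^i with u = π_𝗏(σ(𝗏)). -/
import Mathlib


/-!
STATEMENT 14: Let `(ΩR, d)` have volume form `v ∈ Ω^N R` and let `σ` be a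
degree-preserving automorphism of `ΩR` commuting with `d`.  In the `(N+1)`-dimensional
calculus `ΩA` on `A = R[z;σ]`, the element `v dz` is a volume form:
`Ω^{N+1} A = v dz · A = A · v dz` is free of rank one as a right and as a left `A`-module,
and the associated twisting automorphism is `σ̄⁻¹ ∘ θ̄`, where
`θ̄(Σ aᵢ zⁱ) = Σ θ_v(aᵢ)(uz)ⁱ` with `u = π_v(σ v)`.

Encoding: `Ω` graded by `𝒜`, `R = 𝒜 0`; `S = ΩR[z;σ]` via `ι`, `z`;
`ΩA = S × S` is the trivial extension with multiplication
`(s,m)(s',m') = (ss', sm' + m σ̄(s'))`, graded by `Ω^0 A = S_0 × 0`,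
`Ω^{k+1} A = S_{k+1} × S_k` where `S_j = span{ι(ω) zⁿ | ω ∈ 𝒜 j}`; `v dz = (0, ι v)`;
`A` is the degree-zero part `Ω^0 A`.
-/

/-- The multiplication of the trivial extension `S ⊕ S^{σ̄}`. -/
def trivMulTE {S : Type*} [Ring S] (σbar : S → S) (p q : S × S) : S × S :=
  (p.1 * q.1, p.1 * q.2 + p.2 * σbar q.1)

/-- The degree-`j` part `S_j = (Ω^j R)[z]` of `S = ΩR[z;σ]`. -/
noncomputable def sdeg {F Ω S : Type*} [Field F] [Ring Ω] [Algebra F Ω] [Ring S]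
    [Algebra F S] (𝒜 : ℕ → Submodule F Ω) (ι : Ω →ₐ[F] S) (z : S) (j : ℕ) :
    Submodule F S :=
  Submodule.span F {x : S | ∃ ω ∈ 𝒜 j, ∃ n : ℕ, x = ι ω * z ^ n}

/-- The grading of `ΩA = S ⊕ S^{σ̄}`. -/
noncomputable def gradeTE {F Ω S : Type*} [Field F] [Ring Ω] [Algebra F Ω] [Ring S]
    [Algebra F S] (𝒜 : ℕ → Submodule F Ω) (ι : Ω →ₐ[F] S) (z : S) :
    ℕ → Submodule F (S × S)
  | 0 => (sdeg 𝒜 ι z 0).prod ⊥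
  | k + 1 => (sdeg 𝒜 ι z (k + 1)).prod (sdeg 𝒜 ι z k)

section Aux
variable {F Ω S : Type*} [Field F] [Ring Ω] [Algebra F Ω] [Ring S] [Algebra F S]

/-- `Σ cᵢ zⁱ` -/
noncomputable def repS (ι : Ω →ₐ[F] S) (z : S) (c : ℕ →₀ Ω) : S :=
  c.sum fun i ω => ι ω * z ^ i

/-- indexed map of coefficients -/
noncomputable def cmap (g : ℕ → Ω → Ω) (hg : ∀ i, g i 0 = 0) (c : ℕ →₀ Ω) : ℕ →₀ Ω :=
  Finsupp.onFinset c.support (fun i => g i (c i)) fun i h =>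
    Finsupp.mem_support_iff.2 fun hc => h (show g i (c i) = 0 by rw [hc, hg])

@[simp] lemma cmap_apply (g : ℕ → Ω → Ω) (hg : ∀ i, g i 0 = 0) (c : ℕ →₀ Ω) (i : ℕ) :
    cmap g hg c i = g i (c i) := rfl

lemma repS_zero (ι : Ω →ₐ[F] S) (z : S) : repS ι z 0 = 0 := Finsupp.sum_zero_index

lemma repS_add (ι : Ω →ₐ[F] S) (z : S) (c c' : ℕ →₀ Ω) :
    repS ι z (c + c') = repS ι z c + repS ι z c' :=
  Finsupp.sum_add_index' (fun i => by simp) (fun i ω ω' => by rw [map_add, add_mul])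

lemma repS_smul (ι : Ω →ₐ[F] S) (z : S) (r : F) (c : ℕ →₀ Ω) :
    repS ι z (r • c) = r • repS ι z c := by
  rw [repS, Finsupp.sum_smul_index' (fun i => by simp), repS, Finsupp.smul_sum]
  exact Finsupp.sum_congr fun i _ => by rw [map_smul, smul_mul_assoc]

lemma repS_single (ι : Ω →ₐ[F] S) (z : S) (n : ℕ) (ω : Ω) :
    repS ι z (Finsupp.single n ω) = ι ω * z ^ n :=
  Finsupp.sum_single_index (by simp)

lemma repS_cmap (ι : Ω →ₐ[F] S) (z : S) (g : ℕ → Ω → Ω) (hg : ∀ i, g i 0 = 0)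
    (c : ℕ →₀ Ω) :
    repS ι z (cmap g hg c) = c.sum fun i ω => ι (g i ω) * z ^ i := by
  rw [repS, cmap, Finsupp.onFinset_sum _ (fun a => by simp)]
  rfl

lemma mem_sdeg_iff (𝒜 : ℕ → Submodule F Ω) (ι : Ω →ₐ[F] S) (z : S) (j : ℕ) (x : S) :
    x ∈ sdeg 𝒜 ι z j ↔ ∃ c : ℕ →₀ Ω, (∀ i, c i ∈ 𝒜 j) ∧ x = repS ι z c := by
  constructor
  · intro hx
    induction hx using Submodule.span_induction with
    | mem x hx =>
      obtain ⟨ω, hω, n, rfl⟩ := hx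
      refine ⟨Finsupp.single n ω, fun i => ?_, (repS_single ι z n ω).symm⟩
      rw [Finsupp.single_apply]
      split <;> simp [hω]
    | zero => exact ⟨0, fun i => by simp, (repS_zero ι z).symm⟩
    | add x y hx hy ihx ihy =>
      obtain ⟨c, hc, rfl⟩ := ihx
      obtain ⟨c', hc', rfl⟩ := ihy
      exact ⟨c + c', fun i => add_mem (hc i) (hc' i), (repS_add ι z c c').symm⟩
    | smul r x hx ih =>
      obtain ⟨c, hc, rfl⟩ := ih
      exact ⟨r • c, fun i => Submodule.smul_mem _ r (hc i), (repS_smul ι z r c).symm⟩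
  · rintro ⟨c, hc, rfl⟩
    exact Submodule.sum_mem _ fun i _ => Submodule.subset_span ⟨c i, hc i, i, rfl⟩

end Aux

theorem stmt14 {F Ω S : Type*} [Field F] [Ring Ω] [Algebra F Ω] [Ring S] [Algebra F S]
    (𝒜 : ℕ → Submodule F Ω) (hinternal : DirectSum.IsInternal 𝒜)
    (hone : (1 : Ω) ∈ 𝒜 0)
    (hmul : ∀ i j : ℕ, ∀ a ∈ 𝒜 i, ∀ b ∈ 𝒜 j, a * b ∈ 𝒜 (i + j))
    (d : Ω →ₗ[F] Ω) (N : ℕ)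
    (hd_deg : ∀ n : ℕ, ∀ a ∈ 𝒜 n, d a ∈ 𝒜 (n + 1))
    (hd_sq : ∀ a : Ω, d (d a) = 0)
    (hleibniz : ∀ i : ℕ, ∀ a ∈ 𝒜 i, ∀ b : Ω,
      d (a * b) = d a * b + ((-1 : F) ^ i) • (a * d b))
    (htop : ∀ n : ℕ, N < n → 𝒜 n = ⊥) (hN : 𝒜 N ≠ ⊥)
    -- the volume form `v` on `ΩR` with twisting map `θ` and `u = π_v(σ v)`
    (v : Ω) (hv : v ∈ 𝒜 N)
    (hfree_r : ∀ w ∈ 𝒜 N, ∃! r : Ω, r ∈ 𝒜 0 ∧ w = v * r)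
    (hfree_l : ∀ w ∈ 𝒜 N, ∃! r : Ω, r ∈ 𝒜 0 ∧ w = r * v)
    (θ : Ω → Ω) (hθmem : ∀ a ∈ 𝒜 0, θ a ∈ 𝒜 0)
    (hθ : ∀ a ∈ 𝒜 0, a * v = v * θ a)
    (σ : Ω ≃ₐ[F] Ω)
    (hσdeg : ∀ n : ℕ, ∀ a ∈ 𝒜 n, σ a ∈ 𝒜 n ∧ σ.symm a ∈ 𝒜 n)
    (hσd : ∀ a : Ω, σ (d a) = d (σ a))
    (u : Ω) (humem : u ∈ 𝒜 0) (hu : σ v = v * u)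
    -- the skew polynomial ring `S = ΩR[z;σ]`
    (ι : Ω →ₐ[F] S) (z : S)
    (hcomm : ∀ ω : Ω, z * ι ω = ι (σ ω) * z)
    (hrep : ∀ s : S, ∃! c : ℕ →₀ Ω, s = c.sum fun i ω => ι ω * z ^ i)
    -- the automorphism `σ̄` of `S`
    (σbar : S ≃ₐ[F] S)
    (hσbar : ∀ (i n : ℕ), ∀ ω ∈ 𝒜 i,
      σbar (ι ω * z ^ n) = ((-1 : F) ^ i) • (ι (σ ω) * z ^ n))
    -- the map `θ̄ : Σ aᵢ zⁱ ↦ Σ θ(aᵢ)(uz)ⁱ` on `A = R[z;σ] ⊆ S`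
    (θbar : S → S)
    (hθbar : ∀ c : ℕ →₀ Ω, (∀ i, c i ∈ 𝒜 0) →
      θbar (c.sum fun i r => ι r * z ^ i) = c.sum fun i r => ι (θ r) * (ι u * z) ^ i) :
    -- `v dz` generates `Ω^{N+1} A` on the right and on the left over `A`
    (∀ a ∈ gradeTE 𝒜 ι z 0,
      trivMulTE σbar ((0 : S), ι v) a ∈ gradeTE 𝒜 ι z (N + 1) ∧
      trivMulTE σbar a ((0 : S), ι v) ∈ gradeTE 𝒜 ι z (N + 1)) ∧
    -- freely, as a right `A`-module
    (∀ w ∈ gradeTE 𝒜 ι z (N + 1),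
      ∃! a : S × S, a ∈ gradeTE 𝒜 ι z 0 ∧ w = trivMulTE σbar ((0 : S), ι v) a) ∧
    -- and as a left `A`-module
    (∀ w ∈ gradeTE 𝒜 ι z (N + 1),
      ∃! a : S × S, a ∈ gradeTE 𝒜 ι z 0 ∧ w = trivMulTE σbar a ((0 : S), ι v)) ∧
    -- the twisting automorphism of `v dz` is `σ̄⁻¹ ∘ θ̄`:
    -- `f · (v dz) = (v dz) · σ̄⁻¹(θ̄ f)` for all `f ∈ A`
    (∀ f ∈ sdeg 𝒜 ι z 0,
      trivMulTE σbar (f, (0 : S)) ((0 : S), ι v)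
        = trivMulTE σbar ((0 : S), ι v) (σbar.symm (θbar f), (0 : S))) := by
  classical
  -- iterates of σ preserve degrees
  have hσpow : ∀ (i n : ℕ), ∀ a ∈ 𝒜 n, (σ ^ i) a ∈ 𝒜 n := by
    intro i
    induction i with
    | zero => intro n a ha; simpa using ha
    | succ i ih =>
      intro n a ha
      rw [pow_succ, AlgEquiv.mul_apply]
      exact ih n _ (hσdeg n a ha).1
  have hτpow : ∀ (i n : ℕ), ∀ a ∈ 𝒜 n, (σ.symm ^ i) a ∈ 𝒜 n := by
    intro i
    induction i with
    | zero => intro n a ha; simpa using ha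
    | succ i ih =>
      intro n a ha
      rw [pow_succ, AlgEquiv.mul_apply]
      exact ih n _ (hσdeg n a ha).2
  have hcancel1 : ∀ (i : ℕ) (x : Ω), (σ ^ i) ((σ.symm ^ i) x) = x := by
    intro i
    induction i with
    | zero => intro x; simp
    | succ i ih =>
      intro x
      rw [pow_succ, pow_succ', AlgEquiv.mul_apply, AlgEquiv.mul_apply,
        σ.apply_symm_apply, ih]
  have hcancel2 : ∀ (i : ℕ) (x : Ω), (σ.symm ^ i) ((σ ^ i) x) = x := by
    intro i
    induction i with
    | zero => intro x; simp
    | succ i ih =>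
      intro x
      rw [pow_succ' σ i, pow_succ σ.symm i, AlgEquiv.mul_apply, AlgEquiv.mul_apply,
        σ.symm_apply_apply, ih]
  have hzpow : ∀ (i : ℕ) (ω : Ω), z ^ i * ι ω = ι ((σ ^ i) ω) * z ^ i := by
    intro i
    induction i with
    | zero => intro ω; simp
    | succ i ih =>
      intro ω
      rw [pow_succ z i, mul_assoc, hcomm ω, ← mul_assoc, ih (σ ω), mul_assoc,
        ← pow_succ z i, pow_succ σ i, AlgEquiv.mul_apply]
  have hL : ∀ i : ℕ, ι v * (ι u * z) ^ i = ι ((σ ^ i) v) * z ^ i := by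
    intro i
    induction i with
    | zero => simp
    | succ i ih =>
      have hz : z ^ i * (ι u * z) = ι ((σ ^ i) u) * z ^ (i + 1) := by
        rw [← mul_assoc, hzpow, mul_assoc, ← pow_succ]
      rw [pow_succ (ι u * z) i, ← mul_assoc, ih, mul_assoc, hz, ← mul_assoc,
        ← map_mul ι, ← map_mul (σ ^ i), ← hu, pow_succ σ i, AlgEquiv.mul_apply]
  have hrepinj : ∀ c c' : ℕ →₀ Ω, repS ι z c = repS ι z c' → c = c' := by
    intro c c' h
    obtain ⟨c0, hc0, hu0⟩ := hrep (repS ι z c')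
    have h1 : c = c0 := hu0 c h.symm
    have h2 : c' = c0 := hu0 c' rfl
    rw [h1, h2]
  have hσbar_rep : ∀ c : ℕ →₀ Ω, (∀ i, c i ∈ 𝒜 0) →
      σbar (repS ι z c) = repS ι z (cmap (fun _ ω => σ ω) (fun _ => map_zero σ) c) := by
    intro c hc
    rw [repS_cmap, repS, map_finsuppSum]
    exact Finsupp.sum_congr fun i _ => by simpa using hσbar 0 i (c i) (hc i)
  have hMl : ∀ c : ℕ →₀ Ω, (∀ i, c i ∈ 𝒜 0) →
      ι v * σbar (repS ι z c)
        = repS ι z (cmap (fun _ ω => v * σ ω) (fun _ => by simp) c) := by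
    intro c hc
    rw [hσbar_rep c hc, repS_cmap, repS_cmap, Finsupp.mul_sum]
    exact Finsupp.sum_congr fun i _ => by rw [← mul_assoc, ← map_mul]
  have hMr : ∀ c : ℕ →₀ Ω,
      repS ι z c * ι v
        = repS ι z (cmap (fun i ω => ω * (σ ^ i) v) (fun i => by simp) c) := by
    intro c
    rw [repS_cmap, repS, Finsupp.sum_mul]
    exact Finsupp.sum_congr fun i _ => by rw [mul_assoc, hzpow, ← mul_assoc, ← map_mul]
  have hMθ : ∀ c : ℕ →₀ Ω, (∀ i, c i ∈ 𝒜 0) →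
      ι v * θbar (repS ι z c)
        = repS ι z (cmap (fun i ω => ω * (σ ^ i) v) (fun i => by simp) c) := by
    intro c hc
    rw [repS_cmap, repS, hθbar c hc, Finsupp.mul_sum]
    refine Finsupp.sum_congr fun i _ => ?_
    rw [← mul_assoc, ← map_mul, ← hθ (c i) (hc i), map_mul, mul_assoc, hL,
      ← mul_assoc, ← map_mul]
  have hsdeg_top : ∀ x ∈ sdeg 𝒜 ι z (N + 1), x = 0 := by
    intro x hx
    obtain ⟨c, hc, rfl⟩ := (mem_sdeg_iff 𝒜 ι z (N + 1) x).1 hx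
    have hc0 : c = 0 := Finsupp.ext fun i => by
      have h := hc i
      rw [htop (N + 1) (Nat.lt_succ_self N)] at h
      simpa using h
    rw [hc0, repS_zero]
  have hchr0 : ∀ w (hw : w ∈ 𝒜 N), w = 0 → (hfree_r w hw).choose = 0 := fun w hw h0 =>
    ((hfree_r w hw).choose_spec.2 0 ⟨zero_mem _, by rw [h0, mul_zero]⟩).symm
  have hchl0 : ∀ w (hw : w ∈ 𝒜 N), w = 0 → (hfree_l w hw).choose = 0 := fun w hw h0 =>
    ((hfree_l w hw).choose_spec.2 0 ⟨zero_mem _, by rw [h0, zero_mul]⟩).symm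
  -- existence of preimages, right version
  have hex_r : ∀ c : ℕ →₀ Ω, (∀ i, c i ∈ 𝒜 N) →
      ∃ c' : ℕ →₀ Ω, (∀ i, c' i ∈ 𝒜 0) ∧ ∀ i, v * σ (c' i) = c i := by
    intro c hc
    refine ⟨cmap (fun _ ω => if h : ω ∈ 𝒜 N then σ.symm ((hfree_r ω h).choose) else 0)
      (fun i => by beta_reduce; rw [dif_pos (zero_mem (𝒜 N)), hchr0 0 (zero_mem _) rfl, map_zero]) c,
      ?_, ?_⟩
    · intro i
      rw [cmap_apply, dif_pos (hc i)]
      exact (hσdeg 0 _ ((hfree_r _ (hc i)).choose_spec.1.1)).2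
    · intro i
      rw [cmap_apply, dif_pos (hc i), σ.apply_symm_apply]
      exact ((hfree_r _ (hc i)).choose_spec.1.2).symm
  -- existence of preimages, left version
  have hex_l : ∀ c : ℕ →₀ Ω, (∀ i, c i ∈ 𝒜 N) →
      ∃ c' : ℕ →₀ Ω, (∀ i, c' i ∈ 𝒜 0) ∧ ∀ i, c' i * (σ ^ i) v = c i := by
    intro c hc
    refine ⟨cmap (fun i ω => if h : ω ∈ 𝒜 N then
        (σ ^ i) ((hfree_l ((σ.symm ^ i) ω) (hτpow i N ω h)).choose) else 0)
      (fun i => by beta_reduce; rw [dif_pos (zero_mem (𝒜 N)), hchl0 _ (hτpow i N 0 (zero_mem _)) (map_zero _), map_zero]) c,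
      ?_, ?_⟩
    · intro i
      rw [cmap_apply, dif_pos (hc i)]
      exact hσpow i 0 _ ((hfree_l ((σ.symm ^ i) (c i)) (hτpow i N _ (hc i))).choose_spec.1.1)
    · intro i
      rw [cmap_apply, dif_pos (hc i)]
      have hs := (hfree_l ((σ.symm ^ i) (c i)) (hτpow i N _ (hc i))).choose_spec.1.2
      have h2 := congrArg (σ ^ i) hs
      rw [hcancel1, map_mul] at h2
      exact h2.symm
  -- injectivity, right version
  have hrinj : ∀ x ∈ sdeg 𝒜 ι z 0, ∀ x' ∈ sdeg 𝒜 ι z 0,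
      ι v * σbar x = ι v * σbar x' → x = x' := by
    intro x hx x' hx' h
    obtain ⟨c, hc, rfl⟩ := (mem_sdeg_iff 𝒜 ι z 0 x).1 hx
    obtain ⟨c', hc', rfl⟩ := (mem_sdeg_iff 𝒜 ι z 0 x').1 hx'
    rw [hMl c hc, hMl c' hc'] at h
    have hcc := hrepinj _ _ h
    have hce : c = c' := Finsupp.ext fun i => by
      have hi : v * σ (c i) = v * σ (c' i) := by
        have := DFunLike.congr_fun hcc i
        simpa using this
      have hmem : v * σ (c i) ∈ 𝒜 N := by
        simpa using hmul N 0 v hv _ (hσdeg 0 _ (hc i)).1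
      exact σ.injective ((hfree_r _ hmem).unique ⟨(hσdeg 0 _ (hc i)).1, rfl⟩
        ⟨(hσdeg 0 _ (hc' i)).1, hi⟩)
    rw [hce]
  -- injectivity, left version
  have hlinj : ∀ x ∈ sdeg 𝒜 ι z 0, ∀ x' ∈ sdeg 𝒜 ι z 0,
      x * ι v = x' * ι v → x = x' := by
    intro x hx x' hx' h
    obtain ⟨c, hc, rfl⟩ := (mem_sdeg_iff 𝒜 ι z 0 x).1 hx
    obtain ⟨c', hc', rfl⟩ := (mem_sdeg_iff 𝒜 ι z 0 x').1 hx'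
    rw [hMr c, hMr c'] at h
    have hcc := hrepinj _ _ h
    have hce : c = c' := Finsupp.ext fun i => by
      have hi : c i * (σ ^ i) v = c' i * (σ ^ i) v := by
        have := DFunLike.congr_fun hcc i
        simpa using this
      have hi2 : (σ.symm ^ i) (c i) * v = (σ.symm ^ i) (c' i) * v := by
        have h3 := congrArg (σ.symm ^ i) hi
        rwa [map_mul, map_mul, hcancel2] at h3
      have hmem : (σ.symm ^ i) (c i) * v ∈ 𝒜 N := by
        simpa using hmul 0 N _ (hτpow i 0 _ (hc i)) v hv
      have h4 := (hfree_l _ hmem).unique ⟨hτpow i 0 _ (hc i), rfl⟩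
        ⟨hτpow i 0 _ (hc' i), hi2⟩
      have h5 := congrArg (σ ^ i) h4
      rwa [hcancel1, hcancel1] at h5
    rw [hce]
  refine ⟨?_, ?_, ?_, ?_⟩
  -- Part 1
  · intro a ha
    have ha' := Submodule.mem_prod.1 (show a ∈ (sdeg 𝒜 ι z 0).prod ⊥ from ha)
    have ha2 : a.2 = 0 := by simpa using ha'.2
    obtain ⟨c, hc, hxc⟩ := (mem_sdeg_iff 𝒜 ι z 0 a.1).1 ha'.1
    constructor
    · show trivMulTE σbar ((0 : S), ι v) a ∈ (sdeg 𝒜 ι z (N + 1)).prod (sdeg 𝒜 ι z N)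
      refine Submodule.mem_prod.2 ⟨?_, ?_⟩
      · simp only [trivMulTE, zero_mul]
        exact zero_mem _
      · simp only [trivMulTE, zero_mul, zero_add]
        rw [hxc, hMl c hc]
        exact (mem_sdeg_iff 𝒜 ι z N _).2 ⟨_, fun i => by
          simpa using hmul N 0 v hv _ (hσdeg 0 _ (hc i)).1, rfl⟩
    · show trivMulTE σbar a ((0 : S), ι v) ∈ (sdeg 𝒜 ι z (N + 1)).prod (sdeg 𝒜 ι z N)
      refine Submodule.mem_prod.2 ⟨?_, ?_⟩
      · simp only [trivMulTE, mul_zero]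
        exact zero_mem _
      · simp only [trivMulTE, mul_zero, map_zero, add_zero]
        rw [hxc, hMr c]
        exact (mem_sdeg_iff 𝒜 ι z N _).2 ⟨_, fun i => by
          simpa using hmul 0 N _ (hc i) _ (hσpow i N v hv), rfl⟩
  -- Part 2
  · intro w hw
    have hw' := Submodule.mem_prod.1
      (show w ∈ (sdeg 𝒜 ι z (N + 1)).prod (sdeg 𝒜 ι z N) from hw)
    have hw1 : w.1 = 0 := hsdeg_top _ hw'.1
    obtain ⟨c, hc, hwc⟩ := (mem_sdeg_iff 𝒜 ι z N w.2).1 hw'.2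
    obtain ⟨c', hc', hcc'⟩ := hex_r c hc
    have heq2 : w.2 = ι v * σbar (repS ι z c') := by
      rw [hwc, hMl c' hc']
      exact congrArg (repS ι z) (Finsupp.ext fun i => by
        rw [cmap_apply]; exact (hcc' i).symm)
    refine ⟨(repS ι z c', 0), ⟨?_, ?_⟩, ?_⟩
    · exact Submodule.mem_prod.2 ⟨(mem_sdeg_iff 𝒜 ι z 0 _).2 ⟨c', hc', rfl⟩,
        Submodule.zero_mem _⟩
    · refine Prod.ext ?_ ?_
      · simpa [trivMulTE] using hw1
      · simpa [trivMulTE] using heq2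
    · rintro a ⟨hamem, haeq⟩
      have ha' := Submodule.mem_prod.1 (show a ∈ (sdeg 𝒜 ι z 0).prod ⊥ from hamem)
      have ha2 : a.2 = 0 := by simpa using ha'.2
      have e1 : w.2 = ι v * σbar a.1 := by rw [haeq]; simp [trivMulTE]
      have h1 : a.1 = repS ι z c' := hrinj a.1 ha'.1 _
        ((mem_sdeg_iff 𝒜 ι z 0 _).2 ⟨c', hc', rfl⟩) (e1.symm.trans heq2)
      exact Prod.ext h1 (by rw [ha2])
  -- Part 3
  · intro w hw
    have hw' := Submodule.mem_prod.1
      (show w ∈ (sdeg 𝒜 ι z (N + 1)).prod (sdeg 𝒜 ι z N) from hw)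
    have hw1 : w.1 = 0 := hsdeg_top _ hw'.1
    obtain ⟨c, hc, hwc⟩ := (mem_sdeg_iff 𝒜 ι z N w.2).1 hw'.2
    obtain ⟨c', hc', hcc'⟩ := hex_l c hc
    have heq2 : w.2 = repS ι z c' * ι v := by
      rw [hwc, hMr c']
      exact congrArg (repS ι z) (Finsupp.ext fun i => by
        rw [cmap_apply]; exact (hcc' i).symm)
    refine ⟨(repS ι z c', 0), ⟨?_, ?_⟩, ?_⟩
    · exact Submodule.mem_prod.2 ⟨(mem_sdeg_iff 𝒜 ι z 0 _).2 ⟨c', hc', rfl⟩,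
        Submodule.zero_mem _⟩
    · refine Prod.ext ?_ ?_
      · simpa [trivMulTE] using hw1
      · simpa [trivMulTE] using heq2
    · rintro a ⟨hamem, haeq⟩
      have ha' := Submodule.mem_prod.1 (show a ∈ (sdeg 𝒜 ι z 0).prod ⊥ from hamem)
      have ha2 : a.2 = 0 := by simpa using ha'.2
      have e1 : w.2 = a.1 * ι v := by rw [haeq]; simp [trivMulTE, ha2]
      have h1 : a.1 = repS ι z c' := hlinj a.1 ha'.1 _
        ((mem_sdeg_iff 𝒜 ι z 0 _).2 ⟨c', hc', rfl⟩) (e1.symm.trans heq2)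
      exact Prod.ext h1 (by rw [ha2])
  -- Part 4
  · intro f hf
    obtain ⟨c, hc, rfl⟩ := (mem_sdeg_iff 𝒜 ι z 0 f).1 hf
    have h1 : repS ι z c * ι v = ι v * θbar (repS ι z c) := by
      rw [hMr c, hMθ c hc]
    refine Prod.ext ?_ ?_
    · simp [trivMulTE]
    · simpa [trivMulTE] using h1
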